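/- Let 𝒜 be an uncountable almost disjoint family of infinite subsets of ℕ and K_𝒜 the associated Mrówka space. The map V : C_0(K_𝒜) → ℓ_∞ defined by (Vf)(n) = f(x_n) is a linear isometry onto the closed subspace X_𝒜 = closed span of {1_A : A ∈ 𝒜 ∪ [ℕ]^{<ω}} of ℓ_∞. -/

import Mathlib

open Cardinal Set

/-- The underlying set of the Mrówka space associated with an almost disjoint family `𝒜`
of subsets of `ℕ`: the isolated points `x_n` are `Sum.inl n` and the points `y_A` are
`Sum.inr A`. -/
def Mrowka (𝒜 : Set (Set ℕ)) : Type := ℕ ⊕ ↥𝒜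

/-- The basic neighbourhood `U(A, F) = {x_n : n ∈ A \ F} ∪ {y_A}` of the point `y_A`. -/
def mrowkaNbhd {𝒜 : Set (Set ℕ)} (A : ↥𝒜) (F : Finset ℕ) : Set (Mrowka 𝒜) :=
  (Sum.inl '' ((A : Set ℕ) \ (F : Set ℕ))) ∪ {Sum.inr A}

/-- The Mrówka topology: points `x_n` are isolated and the sets `U(A, F)` form a
neighbourhood basis at `y_A`. -/
instance (𝒜 : Set (Set ℕ)) : TopologicalSpace (Mrowka 𝒜) :=
  TopologicalSpace.generateFrom
    ({s | ∃ n : ℕ, s = {Sum.inl n}} ∪ {s | ∃ (A : ↥𝒜) (F : Finset ℕ), s = mrowkaNbhd A F})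

/-- An almost disjoint family of infinite subsets of `ℕ`. -/
def ADFamily (𝒜 : Set (Set ℕ)) : Prop :=
  (∀ A ∈ 𝒜, A.Infinite) ∧ ∀ A ∈ 𝒜, ∀ B ∈ 𝒜, A ≠ B → (A ∩ B).Finite

open ZeroAtInfty

noncomputable def ind {Γ : Type*} (A : Set Γ) : lp (fun _ : Γ => ℝ) ⊤ :=
  ⟨A.indicator 1, memℓp_infty ⟨1, by
    rintro r ⟨γ, rfl⟩
    by_cases h : γ ∈ A <;> simp [Set.indicator_apply, h]⟩⟩

/-- The subspace $X_𝒜$ of $\ell_\infty$: the closed span of the indicators of members of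
$𝒜$ and of finite subsets of $ℕ$. -/
noncomputable def Xsub (𝒜 : Set (Set ℕ)) : Submodule ℝ (lp (fun _ : ℕ => ℝ) ⊤) :=
  (Submodule.span ℝ {y | ∃ B : Set ℕ, (B ∈ 𝒜 ∨ B.Finite) ∧ y = ind B}).topologicalClosure
/-!
Each `x_n` is isolated and `y_A` is the limit of `x_n` as `n → ∞` in `A`; as the members of `𝒜`
are infinite, the `x_n` are dense, so restriction to them is an isometry `V`. For `A ∈ 𝒜` and
finite `B ⊆ ℕ` the sets `U(A, ∅)` and `{x_n : n ∈ B}` are compact and open, and, by almost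
disjointness, closed; their indicators lie in `C₀(K_𝒜)` and are mapped by `V` to `1_A` and `1_B`,
so the closed range of `V` contains `X_𝒜`. Conversely, fix `f` and `ε > 0`. The compact set
`{|f| ≥ ε}` meets the closed discrete set of the `y_A` in finitely many points; subtracting
`∑ f(y_A) 1_{U(A,∅)}` over them leaves `h` with `|h(y_A)| < ε` for all `A`, so `{|h| ≥ ε}` is a
compact set of isolated points, hence finite, and `Vf` is `ε`-close to
`∑ f(y_A) 1_A + ∑_{|h(x_n)| ≥ ε} h(x_n) 1_{{n}} ∈ span`.
-/

open Filter Topology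
open scoped ENNReal lp

namespace ZeroAtInftyContinuousMap

variable {X E : Type*} [TopologicalSpace X] [NormedAddCommGroup E]

noncomputable def indicatorOfIsClopen {β : Type*} [TopologicalSpace β] [Zero β] [One β]
    {K : Set X} (hK : IsClopen K) (hKc : IsCompact K) : C₀(X, β) where
  toFun := K.indicator 1
  continuous_toFun := hK.continuous_indicator continuous_const
  zero_at_infty' :=
    (HasCompactSupport.intro' hKc hK.isClosed fun _ hx => Set.indicator_of_notMem hx 1)
      |>.is_zero_at_infty

lemma indicatorOfIsClopen_apply {β : Type*} [TopologicalSpace β] [Zero β] [One β] {K : Set X}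
    (hK : IsClopen K) (hKc : IsCompact K) (x : X) :
    (indicatorOfIsClopen hK hKc : C₀(X, β)) x = K.indicator 1 x := rfl

lemma coe_sum {ι : Type*} (s : Finset ι) (g : ι → C₀(X, E)) :
    ⇑(∑ i ∈ s, g i) = ∑ i ∈ s, ⇑(g i) := by
  induction s using Finset.cons_induction <;> simp [*]

lemma norm_apply_le (f : C₀(X, E)) (x : X) : ‖f x‖ ≤ ‖f‖ :=
  norm_toBCF_eq_norm (f := f) ▸ f.toBCF.norm_coe_le_norm x

lemma norm_le_of_dense {s : Set X} (hs : Dense s) (f : C₀(X, E)) {C : ℝ} (hC : 0 ≤ C)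
    (h : ∀ x ∈ s, ‖f x‖ ≤ C) : ‖f‖ ≤ C := by
  rw [← norm_toBCF_eq_norm, BoundedContinuousFunction.norm_le hC]
  exact hs.induction h (isClosed_le (by fun_prop) continuous_const)

lemma isCompact_setOf_le_norm (f : C₀(X, E)) {ε : ℝ} (hε : 0 < ε) :
    IsCompact {x | ε ≤ ‖f x‖} := by
  obtain ⟨K, hK, hKf⟩ := mem_cocompact.mp <|
    (zero_at_infty f).eventually (eventually_norm_sub_lt (0 : E) hε)
  refine hK.of_isClosed_subset (isClosed_le continuous_const (by fun_prop)) fun x hx => ?_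
  by_contra hxK
  have hfx : ‖f x - 0‖ < ε := hKf hxK
  exact (sub_zero (f x) ▸ hfx).not_ge hx

variable {𝕜 : Type*} [NormedField 𝕜] [NormedSpace 𝕜 E] {ι : Type*}

variable (𝕜) in
def precompLinfty (φ : ι → X) : C₀(X, E) →ₗ[𝕜] ℓ^∞(ι, E) where
  toFun f := ⟨f ∘ φ, memℓp_infty ⟨‖f‖, by rintro _ ⟨i, rfl⟩; exact norm_apply_le f (φ i)⟩⟩
  map_add' _ _ := rfl
  map_smul' _ _ := rfl

lemma precompLinfty_apply (φ : ι → X) (f : C₀(X, E)) (i : ι) :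
    precompLinfty 𝕜 φ f i = f (φ i) := rfl

lemma norm_precompLinfty {φ : ι → X} (hφ : DenseRange φ) (f : C₀(X, E)) :
    ‖precompLinfty 𝕜 φ f‖ = ‖f‖ := by
  refine le_antisymm (lp.norm_le_of_forall_le (norm_nonneg f) fun i => norm_apply_le f (φ i)) ?_
  refine norm_le_of_dense hφ f (norm_nonneg _) ?_
  rintro _ ⟨i, rfl⟩
  exact lp.norm_apply_le_norm ENNReal.top_ne_zero (precompLinfty 𝕜 φ f) i

end ZeroAtInftyContinuousMap

section Indicator

variable {Γ : Type*}

lemma ind_apply (A : Set Γ) (γ : Γ) : ind A γ = A.indicator 1 γ := rfl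

lemma coe_sum_smul_ind_singleton (c : Γ → ℝ) (E : Finset Γ) :
    ⇑(∑ γ ∈ E, c γ • ind {γ}) = (E : Set Γ).indicator c := by
  classical
  ext γ
  rw [lp.coeFn_sum, Finset.sum_apply]
  simp only [lp.coeFn_smul, Pi.smul_apply, ind_apply, smul_eq_mul]
  simp [Set.indicator_apply, Finset.sum_ite_eq]

lemma norm_sub_sum_smul_ind_singleton_le (a : ℓ^∞(Γ, ℝ)) (E : Finset Γ) {ε : ℝ} (hε : 0 ≤ ε)
    (h : ∀ γ ∉ E, |a γ| ≤ ε) : ‖a - ∑ γ ∈ E, a γ • ind {γ}‖ ≤ ε := by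
  refine lp.norm_le_of_forall_le hε fun γ => ?_
  rw [lp.coeFn_sub, Pi.sub_apply, coe_sum_smul_ind_singleton]
  by_cases hγ : γ ∈ E
  · simp [hγ, hε]
  · simpa [hγ] using h γ hγ

end Indicator

namespace Mrowka

variable {𝒜 : Set (Set ℕ)}

-- Named points, so that terms have type `Mrowka 𝒜` (carrying the topology) and not `ℕ ⊕ 𝒜`.
def x (n : ℕ) : Mrowka 𝒜 := Sum.inl n

def y (A : 𝒜) : Mrowka 𝒜 := Sum.inr A

lemma x_injective : Function.Injective (x : ℕ → Mrowka 𝒜) := Sum.inl_injective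

lemma y_injective : Function.Injective (y : 𝒜 → Mrowka 𝒜) := Sum.inr_injective

lemma x_ne_y (n : ℕ) (A : 𝒜) : x n ≠ y A := Sum.inl_ne_inr

lemma forall_iff {P : Mrowka 𝒜 → Prop} : (∀ p, P p) ↔ (∀ n, P (x n)) ∧ ∀ A, P (y A) :=
  Sum.forall

lemma compl_range_y : (range (y : 𝒜 → Mrowka 𝒜))ᶜ = range x := compl_range_inr

lemma x_mem_mrowkaNbhd {A : 𝒜} {F : Finset ℕ} {n : ℕ} :
    x n ∈ mrowkaNbhd A F ↔ n ∈ (A : Set ℕ) ∧ n ∉ F := by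
  refine ⟨?_, fun h => .inl ⟨n, h, rfl⟩⟩
  rintro (⟨m, hm, h⟩ | h)
  · exact x_injective h ▸ hm
  · exact absurd h (x_ne_y n A)

lemma y_mem_mrowkaNbhd {A B : 𝒜} {F : Finset ℕ} : y B ∈ mrowkaNbhd A F ↔ B = A := by
  refine ⟨?_, fun h => .inr (congrArg y h)⟩
  rintro (⟨n, -, h⟩ | h)
  · exact absurd h (x_ne_y n B)
  · exact y_injective h

lemma mrowkaNbhd_eq_insert (A : 𝒜) (F : Finset ℕ) :
    mrowkaNbhd A F = insert (y A) (x '' ((A : Set ℕ) \ F)) :=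
  union_singleton

lemma mrowkaNbhd_anti (A : 𝒜) {F G : Finset ℕ} (h : F ⊆ G) :
    mrowkaNbhd A G ⊆ mrowkaNbhd A F := by
  refine forall_iff.mpr ⟨fun n => ?_, fun B => ?_⟩
  · simpa only [x_mem_mrowkaNbhd] using And.imp_right (mt (@h n))
  · simp only [y_mem_mrowkaNbhd, imp_self]

lemma isOpen_singleton_x (n : ℕ) : IsOpen {(x n : Mrowka 𝒜)} :=
  .basic _ (.inl ⟨n, rfl⟩)

lemma isOpen_mrowkaNbhd (A : 𝒜) (F : Finset ℕ) : IsOpen (mrowkaNbhd A F) :=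
  .basic _ (.inr ⟨A, F, rfl⟩)

lemma hasBasis_nhds_y (A : 𝒜) : (𝓝 (y A)).HasBasis (fun _ => True) (mrowkaNbhd A) := by
  suffices 𝓝 (y A) = ⨅ F : Finset ℕ, 𝓟 (mrowkaNbhd A F) from
    this ▸ hasBasis_iInf_principal (directed_of_isDirected_le fun _ _ => mrowkaNbhd_anti A)
  refine (TopologicalSpace.nhds_generateFrom (a := y A)).trans (le_antisymm ?_ ?_)
  · exact le_iInf fun F => iInf₂_le _ ⟨y_mem_mrowkaNbhd.mpr rfl, .inr ⟨A, F, rfl⟩⟩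
  · refine le_iInf₂ fun s ⟨hAs, hs⟩ => ?_
    obtain ⟨n, rfl⟩ | ⟨B, F, rfl⟩ := hs
    · exact absurd hAs (x_ne_y n A).symm
    · obtain rfl := y_mem_mrowkaNbhd.mp hAs
      exact iInf_le _ F

lemma isOpen_iff {s : Set (Mrowka 𝒜)} :
    IsOpen s ↔ ∀ A : 𝒜, y A ∈ s → ∃ F : Finset ℕ, mrowkaNbhd A F ⊆ s := by
  refine isOpen_iff_mem_nhds.trans ⟨fun h A hA => ?_, fun h => forall_iff.mpr ⟨?_, ?_⟩⟩
  · simpa using (hasBasis_nhds_y A).mem_iff.mp (h _ hA)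
  · exact fun n hn =>
      mem_of_superset ((isOpen_singleton_x n).mem_nhds rfl) (singleton_subset_iff.mpr hn)
  · intro A hA
    obtain ⟨F, hF⟩ := h A hA
    exact (hasBasis_nhds_y A).mem_of_superset trivial hF

lemma tendsto_x_nhds_y {A : 𝒜} {C : Set ℕ} (hC : C ⊆ A) :
    Tendsto (fun n : C => x n) cofinite (𝓝 (y A)) := by
  refine (hasBasis_nhds_y A).tendsto_right_iff.mpr fun F _ => eventually_cofinite.mpr ?_
  refine (F.finite_toSet.preimage Subtype.val_injective.injOn).subset fun n hn => ?_
  by_contra hnF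
  exact hn (x_mem_mrowkaNbhd.mpr ⟨hC n.2, hnF⟩)

lemma denseRange_x (h𝒜 : ∀ A ∈ 𝒜, A.Infinite) : DenseRange (x : ℕ → Mrowka 𝒜) := by
  refine forall_iff.mpr ⟨fun n => subset_closure ⟨n, rfl⟩, fun A => ?_⟩
  have := (h𝒜 A A.2).to_subtype
  exact mem_closure_of_tendsto (tendsto_x_nhds_y subset_rfl) (.of_forall fun n => ⟨n, rfl⟩)

lemma isCompact_mrowkaNbhd (A : 𝒜) (F : Finset ℕ) : IsCompact (mrowkaNbhd A F) := by
  rw [mrowkaNbhd_eq_insert, image_eq_range]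
  exact (tendsto_x_nhds_y sdiff_subset).isCompact_insert_range_of_cofinite

lemma isClopen_mrowkaNbhd (h𝒜 : 𝒜.Pairwise fun A B => (A ∩ B).Finite) (A : 𝒜)
    (F : Finset ℕ) : IsClopen (mrowkaNbhd A F) := by
  refine ⟨isOpen_compl_iff.mp (isOpen_iff.mpr fun B hB => ?_), isOpen_mrowkaNbhd A F⟩
  have hBA : (B : Set ℕ) ≠ A := fun h => hB (y_mem_mrowkaNbhd.mpr (Subtype.ext h))
  have hfin := h𝒜 B.2 A.2 hBA
  refine ⟨hfin.toFinset, forall_iff.mpr ⟨fun n hnB hnA => ?_, fun C hCB hCA => ?_⟩⟩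
  · rw [x_mem_mrowkaNbhd] at hnB hnA
    exact hnB.2 (hfin.mem_toFinset.mpr ⟨hnB.1, hnA.1⟩)
  · rw [y_mem_mrowkaNbhd] at hCB hCA
    exact hBA (congrArg Subtype.val (hCB.symm.trans hCA))

lemma isOpen_image_x (B : Set ℕ) : IsOpen (x '' B : Set (Mrowka 𝒜)) :=
  isOpen_iff.mpr fun A ⟨_, _, h⟩ => absurd h (x_ne_y _ A)

lemma isClopen_image_x {B : Set ℕ} (hB : B.Finite) : IsClopen (x '' B : Set (Mrowka 𝒜)) := by
  refine ⟨isOpen_compl_iff.mp (isOpen_iff.mpr fun A _ => ⟨hB.toFinset, ?_⟩), isOpen_image_x B⟩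
  rintro _ hp ⟨n, hn, rfl⟩
  exact (x_mem_mrowkaNbhd.mp hp).2 (hB.mem_toFinset.mpr hn)

lemma isClosed_range_y : IsClosed (range (y : 𝒜 → Mrowka 𝒜)) := by
  rw [← isOpen_compl_iff, compl_range_y, ← image_univ]
  exact isOpen_image_x univ

lemma isDiscrete_range_y : IsDiscrete (range (y : 𝒜 → Mrowka 𝒜)) := by
  refine isDiscrete_iff_forall_mem_exists_isOpen.mpr ?_
  rintro _ ⟨A, rfl⟩
  refine ⟨mrowkaNbhd A ∅, isOpen_mrowkaNbhd A ∅, subset_antisymm ?_ ?_⟩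
  · rintro _ ⟨hp, B, rfl⟩
    exact congrArg y (y_mem_mrowkaNbhd.mp hp)
  · rintro _ rfl
    exact ⟨y_mem_mrowkaNbhd.mpr rfl, A, rfl⟩

lemma finite_of_isCompact_of_subset_range_x {K : Set (Mrowka 𝒜)} (hK : IsCompact K)
    (hKx : K ⊆ range x) : K.Finite := by
  refine hK.finite (.of_nhdsWithin fun p hp => ?_)
  obtain ⟨n, rfl⟩ := hKx hp
  exact nhdsWithin_le_nhds.trans
    ((isOpen_singleton_iff_nhds_eq_pure _).mp (isOpen_singleton_x n)).le

lemma finite_preimage_y_of_isCompact {K : Set (Mrowka 𝒜)} (hK : IsCompact K) :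
    (y ⁻¹' K).Finite := by
  have hfin :=
    (hK.inter_right isClosed_range_y).finite (isDiscrete_range_y.mono inter_subset_right)
  simpa using hfin.preimage y_injective.injOn

open ZeroAtInftyContinuousMap

noncomputable def nbhdIndicator (h𝒜 : 𝒜.Pairwise fun A B => (A ∩ B).Finite) (A : 𝒜) :
    C₀(Mrowka 𝒜, ℝ) :=
  indicatorOfIsClopen (isClopen_mrowkaNbhd h𝒜 A ∅) (isCompact_mrowkaNbhd A ∅)

noncomputable def finiteIndicator {B : Set ℕ} (hB : B.Finite) : C₀(Mrowka 𝒜, ℝ) :=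
  indicatorOfIsClopen (isClopen_image_x hB) (hB.image x).isCompact

section Indicators

variable {h𝒜 : 𝒜.Pairwise fun A B => (A ∩ B).Finite}

lemma nbhdIndicator_y [DecidableEq 𝒜] (A B : 𝒜) :
    nbhdIndicator h𝒜 A (y B) = if B = A then 1 else 0 := by
  classical
  simp [nbhdIndicator, indicatorOfIsClopen_apply, Set.indicator_apply, y_mem_mrowkaNbhd]

lemma precompLinfty_nbhdIndicator (A : 𝒜) :
    precompLinfty ℝ x (nbhdIndicator h𝒜 A) = ind A := by
  classical
  ext n
  simp [precompLinfty_apply, nbhdIndicator, indicatorOfIsClopen_apply, ind_apply,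
    Set.indicator_apply, x_mem_mrowkaNbhd]

end Indicators

lemma precompLinfty_finiteIndicator {B : Set ℕ} (hB : B.Finite) :
    precompLinfty ℝ x (finiteIndicator (𝒜 := 𝒜) hB) = ind B := by
  ext n
  exact Set.indicator_image x_injective

lemma ind_mem_range_precompLinfty (h𝒜 : 𝒜.Pairwise fun A B => (A ∩ B).Finite) {B : Set ℕ}
    (hB : B ∈ 𝒜 ∨ B.Finite) : ind B ∈ range (precompLinfty ℝ (x : ℕ → Mrowka 𝒜)) := by
  rcases hB with hB | hB
  exacts [⟨nbhdIndicator h𝒜 ⟨B, hB⟩, precompLinfty_nbhdIndicator _⟩,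
    ⟨finiteIndicator hB, precompLinfty_finiteIndicator hB⟩]

lemma exists_finset_abs_sub_sum_nbhdIndicator_lt (h𝒜 : 𝒜.Pairwise fun A B => (A ∩ B).Finite)
    (f : C₀(Mrowka 𝒜, ℝ)) {ε : ℝ} (hε : 0 < ε) :
    ∃ S : Finset 𝒜, ∀ B : 𝒜, |(f - ∑ A ∈ S, f (y A) • nbhdIndicator h𝒜 A) (y B)| < ε := by
  classical
  have hS := finite_preimage_y_of_isCompact (f.isCompact_setOf_le_norm hε)
  refine ⟨hS.toFinset, fun B => ?_⟩
  by_cases hB : ε ≤ |f (y B)|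
  · simp [coe_sum, Finset.sum_apply, nbhdIndicator_y, hB, hε]
  · simpa [coe_sum, Finset.sum_apply, nbhdIndicator_y, hB] using not_le.mp hB

lemma finite_setOf_le_abs_x (f : C₀(Mrowka 𝒜, ℝ)) {ε : ℝ} (hε : 0 < ε)
    (hf : ∀ A, |f (y A)| < ε) : {n | ε ≤ |f (x n)|}.Finite := by
  suffices {p | ε ≤ ‖f p‖}.Finite from
    (this.preimage (f := x) x_injective.injOn).subset fun _ => id
  refine finite_of_isCompact_of_subset_range_x (f.isCompact_setOf_le_norm hε) ?_
  rw [← compl_range_y]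
  rintro _ hp ⟨A, rfl⟩
  exact (hf A).not_ge hp

lemma exists_mem_span_norm_precompLinfty_sub_le
    (h𝒜 : 𝒜.Pairwise fun A B => (A ∩ B).Finite) (f : C₀(Mrowka 𝒜, ℝ)) {ε : ℝ} (hε : 0 < ε) :
    ∃ g ∈ Submodule.span ℝ {v | ∃ B : Set ℕ, (B ∈ 𝒜 ∨ B.Finite) ∧ v = ind B},
      ‖precompLinfty ℝ x f - g‖ ≤ ε := by
  obtain ⟨S, hS⟩ := exists_finset_abs_sub_sum_nbhdIndicator_lt h𝒜 f hε
  set h := f - ∑ A ∈ S, f (y A) • nbhdIndicator h𝒜 A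
  have hE := finite_setOf_le_abs_x h hε hS
  refine ⟨∑ A ∈ S, f (y A) • ind A + ∑ n ∈ hE.toFinset, h (x n) • ind {n}, ?_, ?_⟩
  · refine add_mem (sum_mem fun A _ => Submodule.smul_mem _ _ ?_)
      (sum_mem fun n _ => Submodule.smul_mem _ _ ?_)
    exacts [Submodule.subset_span ⟨A, .inl A.2, rfl⟩,
      Submodule.subset_span ⟨{n}, .inr (finite_singleton n), rfl⟩]
  · have hVh : precompLinfty ℝ x h = precompLinfty ℝ x f - ∑ A ∈ S, f (y A) • ind A := by
      simp [h, map_sum, precompLinfty_nbhdIndicator]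
    have key : ‖precompLinfty ℝ x h - ∑ n ∈ hE.toFinset, h (x n) • ind {n}‖ ≤ ε :=
      norm_sub_sum_smul_ind_singleton_le _ _ hε.le fun n hn =>
        (not_le.mp (by simpa [precompLinfty_apply] using hn)).le
    rwa [hVh, sub_sub] at key

lemma precompLinfty_x_mem_Xsub (h𝒜 : 𝒜.Pairwise fun A B => (A ∩ B).Finite)
    (f : C₀(Mrowka 𝒜, ℝ)) : precompLinfty ℝ x f ∈ Xsub 𝒜 := by
  refine Metric.mem_closure_iff.mpr fun δ hδ => ?_
  obtain ⟨g, hg, hfg⟩ := exists_mem_span_norm_precompLinfty_sub_le h𝒜 f (half_pos hδ)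
  exact ⟨g, hg, by rw [dist_eq_norm]; linarith⟩

end Mrowka

open Mrowka ZeroAtInftyContinuousMap in
theorem mrowka_isometry_onto_Xsub_general (𝒜 : Set (Set ℕ)) (had : ADFamily 𝒜) :
    ∃ V : C₀(Mrowka 𝒜, ℝ) →ₗᵢ[ℝ] lp (fun _ : ℕ => ℝ) ⊤,
      (∀ (f : C₀(Mrowka 𝒜, ℝ)) (n : ℕ), V f n = f (Sum.inl n)) ∧
      Set.range V = (Xsub 𝒜 : Set (lp (fun _ : ℕ => ℝ) ⊤)) := by
  have h𝒜 : 𝒜.Pairwise fun A B => (A ∩ B).Finite := fun A hA B hB => had.2 A hA B hB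
  let V : C₀(Mrowka 𝒜, ℝ) →ₗᵢ[ℝ] ℓ^∞(ℕ, ℝ) :=
    ⟨precompLinfty ℝ x, norm_precompLinfty (denseRange_x had.1)⟩
  refine ⟨V, fun f n => rfl, ?_⟩
  refine subset_antisymm (range_subset_iff.mpr (precompLinfty_x_mem_Xsub h𝒜)) ?_
  have hclosed : IsClosed (LinearMap.range V.toLinearMap : Set ℓ^∞(ℕ, ℝ)) :=
    V.isometry.isClosedEmbedding.isClosed_range
  refine Submodule.topologicalClosure_minimal _ (Submodule.span_le.mpr ?_) hclosed
  rintro _ ⟨B, hB, rfl⟩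
  exact ind_mem_range_precompLinfty h𝒜 hB

theorem mrowka_isometry_onto_Xsub (𝒜 : Set (Set ℕ)) (had : ADFamily 𝒜)
    (hunc : ¬𝒜.Countable) :
    ∃ V : C₀(Mrowka 𝒜, ℝ) →ₗᵢ[ℝ] lp (fun _ : ℕ => ℝ) ⊤,
      (∀ (f : C₀(Mrowka 𝒜, ℝ)) (n : ℕ), V f n = f (Sum.inl n)) ∧
      Set.range V = (Xsub 𝒜 : Set (lp (fun _ : ℕ => ℝ) ⊤)) :=
  mrowka_isometry_onto_Xsub_general 𝒜 had
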